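/- Let U be a unital associative ℂ-algebra and let φ_n ∈ U (n ∈ ℤ) satisfy φ_mφ_n + φ_nφ_m = 2(−1)^m δ_{m,−n}·1 for all m, n ∈ ℤ. Set φ(z) := Σ_{n∈ℤ} φ_n z^n, φ(z)_+ := Σ_{n≥0} φ_n z^n, φ(z)_− := Σ_{n<0} φ_n z^n, :φ(z)φ(w): := φ(z)_+φ(w) − φ(w)φ(z)_−, and Φ(z,w) := :φ(z)φ(w): − 1. Then in U[[z₁^{±1},w₁^{±1},z₂^{±1},w₂^{±1}]]: [Φ(z₁,w₁), Φ(z₂,w₂)] = −2z₂·δ(w₁+z₂)·Φ(z₁,w₂) + 2w₂·δ(w₁+w₂)·Φ(z₁,z₂) − 2w₂·δ(z₁+w₂)·Φ(w₁,z₂) + 2z₂·δ(z₁+z₂)·Φ(w₁,w₂) + G(w₁,z₂)G(z₁,w₂) − G(w₂,z₁)G(z₂,w₁) − G(w₁,w₂)G(z₁,z₂) + G(w₂,w₁)G(z₂,z₁), where δ(x+y) := Σ_{n∈ℤ} (−1)^{n+1} x^n y^{−n−1} and G(x,y) := 1 + 2·Σ_{j≥1} (−1)^j x^{−j} y^{j}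 (the expansion i_{x,y} of (x−y)/(x+y) in nonnegative powers of y). -/
import Mathlib


/- One-variable formal distributions in `U[[z^{±1}]]` are encoded as coefficient functions
`ℤ → U`.  Products of formal distributions in pairwise distinct variables are coefficientwise,
so elements of `U[[z₁^{±1},w₁^{±1},z₂^{±1},w₂^{±1}]]` appearing below are encoded through their
coefficients at `z₁^{p₁} w₁^{q₁} z₂^{p₂} w₂^{q₂}`, and the claimed identity is an equality of
all such coefficients. -/

noncomputable section

/-- `φ(z)_+ = Σ_{n≥0} φ_n z^n`. -/
def phiPlus {U : Type*} [Ring U] (φ : ℤ → U) : ℤ → U := fun m => if 0 ≤ m then φ m else 0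

/-- `φ(z)_− = Σ_{n<0} φ_n z^n`. -/
def phiMinus {U : Type*} [Ring U] (φ : ℤ → U) : ℤ → U := fun m => if m < 0 then φ m else 0

/-- `Φ(z,w) := :φ(z)φ(w): − 1 = φ(z)_+φ(w) − φ(w)φ(z)_− − 1`. -/
def PhiB {U : Type*} [Ring U] (φ : ℤ → U) : ℤ → ℤ → U :=
  fun p q => phiPlus φ p * φ q - φ q * phiMinus φ p - (if p = 0 ∧ q = 0 then (1 : U) else 0)

/-- The coefficients of `δ(x+y) := Σ_{n∈ℤ} (−1)^{n+1} x^n y^{−n−1}`. -/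
def deltaPlusC : ℤ → ℤ → ℂ := fun a b => if b = -a - 1 then (-1 : ℂ) ^ (a + 1) else 0

/-- The coefficients of `G(x,y) := 1 + 2 Σ_{j≥1} (−1)^j x^{−j} y^j`
(the expansion `i_{x,y}` of `(x−y)/(x+y)`). -/
def GB : ℤ → ℤ → ℂ := fun a b =>
  if a = 0 ∧ b = 0 then 1 else if 1 ≤ b ∧ a = -b then 2 * (-1 : ℂ) ^ b else 0


/-! ### Auxiliary scalar functions and lemmas -/

def SB : ℤ → ℤ → ℂ := fun m n => if m = -n then 2 * (-1 : ℂ) ^ m else 0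
def IC : ℤ → ℤ → ℂ := fun m n => if m = -n then 1 else 0
def eC : ℤ → ℂ := fun m => (-1 : ℂ) ^ m
def NC : ℤ → ℂ := fun p => if p < 0 then 2 * eC p else if p = 0 then 1 else 0
def MC : ℤ → ℂ := fun p => if 1 ≤ p then 2 * eC p else if p = 0 then 1 else 0
def cBc : ℤ → ℤ → ℂ := fun p q =>
  (if p = -q ∧ p < 0 then 2 * (-1 : ℂ) ^ p else 0) + (if p = 0 ∧ q = 0 then 1 else 0)

lemma negOne_zpow_neg (n : ℤ) : (-1 : ℂ) ^ (-n) = (-1 : ℂ) ^ n := by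
  rw [zpow_neg, ← inv_zpow, inv_neg, inv_one]

lemma eC_neg (n : ℤ) : eC (-n) = eC n := negOne_zpow_neg n

lemma SB_symm (m n : ℤ) : SB m n = SB n m := by
  unfold SB
  split_ifs with h1 h2 h2
  · obtain rfl : m = -n := h1
    rw [negOne_zpow_neg]
  · exfalso; omega
  · exfalso; omega
  · rfl

lemma SB_eq_IC (m n : ℤ) : SB m n = IC m n * (2 * eC m) := by
  unfold SB IC eC; split_ifs <;> ring

lemma cBc_eq_IC (p q : ℤ) : cBc p q = IC p q * NC p := by
  unfold cBc IC NC eC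
  split_ifs <;> first | (exfalso; omega) | ring

lemma GB_eq_IC (a b : ℤ) : GB a b = IC a b * MC b := by
  unfold GB IC MC eC
  split_ifs <;> first | (exfalso; omega) | ring

lemma IC_symm (m n : ℤ) : IC m n = IC n m := by
  unfold IC; split_ifs <;> first | rfl | (exfalso; omega)

lemma IC_MC (m n : ℤ) : IC m n * MC n = IC m n * NC m := by
  unfold IC
  split_ifs with h
  · obtain rfl : n = -m := by omega
    unfold MC NC
    rw [eC_neg]
    split_ifs <;> first | (exfalso; omega) | rfl
  · rw [zero_mul, zero_mul]

lemma IC_eC (m n : ℤ) : IC m n * (2 * eC n) = IC m n * (2 * eC m) := by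
  unfold IC
  split_ifs with h
  · obtain rfl : n = -m := by omega
    rw [eC_neg]
  · rw [zero_mul, zero_mul]

lemma keyId (p q : ℤ) :
    2 * eC q * NC p + 2 * eC p * NC q - 4 * (eC p * eC q) = NC p * NC q - MC p * MC q := by
  unfold NC MC
  split_ifs <;>
    first
      | (exfalso; omega)
      | (subst_vars; simp only [eC, zpow_zero]; ring)

lemma scalarId (p₁ q₁ p₂ q₂ : ℤ) :
    SB q₁ p₂ * cBc p₁ q₂ - SB p₁ p₂ * cBc q₁ q₂ - SB q₁ q₂ * cBc p₁ p₂ + SB p₁ q₂ * cBc q₁ p₂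
      + SB q₁ q₂ * SB p₂ p₁ - SB p₁ q₂ * SB p₂ q₁
    = GB q₁ p₂ * GB p₁ q₂ - GB q₂ p₁ * GB p₂ q₁ - GB q₁ q₂ * GB p₁ p₂ + GB q₂ q₁ * GB p₂ p₁ := by
  rw [SB_eq_IC q₁ p₂, SB_eq_IC p₁ p₂, SB_eq_IC q₁ q₂, SB_eq_IC p₁ q₂, SB_eq_IC p₂ p₁,
      SB_eq_IC p₂ q₁, cBc_eq_IC p₁ q₂, cBc_eq_IC q₁ q₂, cBc_eq_IC p₁ p₂, cBc_eq_IC q₁ p₂,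
      GB_eq_IC q₁ p₂, GB_eq_IC p₁ q₂, GB_eq_IC q₂ p₁, GB_eq_IC p₂ q₁, GB_eq_IC q₁ q₂,
      GB_eq_IC p₁ p₂, GB_eq_IC q₂ q₁, GB_eq_IC p₂ p₁,
      IC_symm p₂ p₁, IC_symm p₂ q₁, IC_symm q₂ p₁, IC_symm q₂ q₁,
      IC_MC q₁ p₂, IC_MC p₁ q₂, IC_MC q₁ q₂, IC_MC p₁ p₂,
      IC_eC q₁ p₂, IC_eC p₁ p₂]
  linear_combination (IC q₁ p₂ * IC p₁ q₂ - IC p₁ p₂ * IC q₁ q₂) * keyId p₁ q₁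

lemma SB_eq_delta (m n : ℤ) : -2 * deltaPlusC m (n - 1) = SB m n := by
  unfold deltaPlusC SB
  by_cases hc : m = -n
  · rw [if_pos (by omega), if_pos hc, zpow_add_one₀ (by norm_num : (-1 : ℂ) ≠ 0)]
    ring
  · rw [if_neg (by omega), if_neg hc]
    ring

lemma SB_eq_delta' (m n : ℤ) : 2 * deltaPlusC m (n - 1) = -SB m n := by
  rw [← SB_eq_delta m n]; ring

/-- The commutator identity `[Φ(z₁,w₁), Φ(z₂,w₂)] = −2z₂δ(w₁+z₂)Φ(z₁,w₂)
+ 2w₂δ(w₁+w₂)Φ(z₁,z₂) − 2w₂δ(z₁+w₂)Φ(w₁,z₂) + 2z₂δ(z₁+z₂)Φ(w₁,w₂)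
+ G(w₁,z₂)G(z₁,w₂) − G(w₂,z₁)G(z₂,w₁) − G(w₁,w₂)G(z₁,z₂) + G(w₂,w₁)G(z₂,z₁)`
for the type B fermion.  (This is the content of the statement that
`E^B(z,w) ↦ ½Φ(z,w)`, `c ↦ 1` is a representation of `b_∞`.) -/
theorem PhiB_commutator {U : Type*} [Ring U] [Algebra ℂ U] (φ : ℤ → U)
    (h : ∀ m n : ℤ, φ m * φ n + φ n * φ m =
      if m = -n then (2 * (-1 : ℂ) ^ m) • (1 : U) else 0) :
    ∀ p₁ q₁ p₂ q₂ : ℤ,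
      PhiB φ p₁ q₁ * PhiB φ p₂ q₂ - PhiB φ p₂ q₂ * PhiB φ p₁ q₁ =
        (-2 * deltaPlusC q₁ (p₂ - 1)) • PhiB φ p₁ q₂
        + (2 * deltaPlusC q₁ (q₂ - 1)) • PhiB φ p₁ p₂
        + (-2 * deltaPlusC p₁ (q₂ - 1)) • PhiB φ q₁ p₂
        + (2 * deltaPlusC p₁ (p₂ - 1)) • PhiB φ q₁ q₂
        + (GB q₁ p₂ * GB p₁ q₂ - GB q₂ p₁ * GB p₂ q₁
            - GB q₁ q₂ * GB p₁ p₂ + GB q₂ q₁ * GB p₂ p₁) • (1 : U) := by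
  intro p₁ q₁ p₂ q₂
  have hS : ∀ m n : ℤ, φ m * φ n = SB m n • (1 : U) - φ n * φ m := by
    intro m n
    refine eq_sub_of_add_eq ?_
    rw [h m n]
    unfold SB
    split_ifs with hc
    · rfl
    · rw [zero_smul]
  have hP : ∀ p q : ℤ, PhiB φ p q = φ p * φ q - cBc p q • (1 : U) := by
    intro p q
    unfold PhiB phiPlus phiMinus cBc
    by_cases hp : p < 0
    · rw [if_neg (by omega), if_pos hp, if_neg (show ¬(p = 0 ∧ q = 0) by omega)]
      by_cases hpq : p = -q
      · have hq := eq_sub_of_add_eq ((h p q).trans (if_pos hpq))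
        rw [if_pos ⟨hpq, hp⟩, if_neg (show ¬(p = 0 ∧ q = 0) by omega), add_zero, zero_mul, hq]
        abel
      · have hq := eq_sub_of_add_eq ((h p q).trans (if_neg hpq))
        rw [if_neg (show ¬(p = -q ∧ p < 0) by tauto), if_neg (show ¬(p = 0 ∧ q = 0) by omega),
          add_zero, zero_mul, hq, zero_smul]
    · rw [if_pos (by omega), if_neg hp, if_neg (show ¬(p = -q ∧ p < 0) from fun hh => hp hh.2)]
      by_cases h0 : p = 0 ∧ q = 0
      · rw [if_pos h0, if_pos h0, zero_add, one_smul, mul_zero, sub_zero]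
      · rw [if_neg h0, if_neg h0, zero_add, zero_smul, mul_zero, sub_zero]
  have sda : ∀ t : U, φ q₂ * (φ p₁ * t) = SB p₁ q₂ • t - φ p₁ * (φ q₂ * t) := by
    intro t
    rw [← mul_assoc, hS q₂ p₁, SB_symm q₂ p₁, sub_mul, smul_mul_assoc, one_mul, mul_assoc]
  have sdb : ∀ t : U, φ q₂ * (φ q₁ * t) = SB q₁ q₂ • t - φ q₁ * (φ q₂ * t) := by
    intro t
    rw [← mul_assoc, hS q₂ q₁, SB_symm q₂ q₁, sub_mul, smul_mul_assoc, one_mul, mul_assoc]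
  have sca : ∀ t : U, φ p₂ * (φ p₁ * t) = SB p₁ p₂ • t - φ p₁ * (φ p₂ * t) := by
    intro t
    rw [← mul_assoc, hS p₂ p₁, SB_symm p₂ p₁, sub_mul, smul_mul_assoc, one_mul, mul_assoc]
  have scb : ∀ t : U, φ p₂ * (φ q₁ * t) = SB q₁ p₂ • t - φ q₁ * (φ p₂ * t) := by
    intro t
    rw [← mul_assoc, hS p₂ q₁, SB_symm p₂ q₁, sub_mul, smul_mul_assoc, one_mul, mul_assoc]
  have sda0 : φ q₂ * φ p₁ = SB p₁ q₂ • (1 : U) - φ p₁ * φ q₂ := by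
    rw [hS q₂ p₁, SB_symm q₂ p₁]
  have sdb0 : φ q₂ * φ q₁ = SB q₁ q₂ • (1 : U) - φ q₁ * φ q₂ := by
    rw [hS q₂ q₁, SB_symm q₂ q₁]
  have sca0 : φ p₂ * φ p₁ = SB p₁ p₂ • (1 : U) - φ p₁ * φ p₂ := by
    rw [hS p₂ p₁, SB_symm p₂ p₁]
  have scb0 : φ p₂ * φ q₁ = SB q₁ p₂ • (1 : U) - φ q₁ * φ p₂ := by
    rw [hS p₂ q₁, SB_symm p₂ q₁]
  rw [hP p₁ q₁, hP p₂ q₂, hP p₁ q₂, hP p₁ p₂, hP q₁ p₂, hP q₁ q₂,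
    SB_eq_delta q₁ p₂, SB_eq_delta' q₁ q₂, SB_eq_delta p₁ q₂, SB_eq_delta' p₁ p₂]
  simp only [mul_sub, sub_mul, smul_mul_assoc, mul_smul_comm, one_mul, mul_one, smul_sub,
    sub_smul, neg_smul, smul_smul, mul_assoc, sda, sdb, sca, scb, sda0, sdb0, sca0, scb0]
  match_scalars <;>
    first
      | ring1
      | linear_combination (2 : ℂ) * scalarId p₁ q₁ p₂ q₂ - SB p₁ q₂ * SB_symm q₁ p₂
          + SB q₁ q₂ * SB_symm p₁ p₂
      | linear_combination (-2 : ℂ) * scalarId p₁ q₁ p₂ q₂ + SB p₁ q₂ * SB_symm q₁ p₂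
          - SB q₁ q₂ * SB_symm p₁ p₂
      | linear_combination scalarId p₁ q₁ p₂ q₂ + SB_symm p₁ q₂ - SB p₁ q₂ * SB_symm q₁ p₂
          + SB q₁ q₂ * SB_symm p₁ p₂
      | linear_combination -scalarId p₁ q₁ p₂ q₂ - SB_symm p₁ q₂ + SB p₁ q₂ * SB_symm q₁ p₂
          - SB q₁ q₂ * SB_symm p₁ p₂
      | linear_combination scalarId p₁ q₁ p₂ q₂ - SB p₁ q₂ * SB_symm q₁ p₂
          + SB q₁ q₂ * SB_symm p₁ p₂


end
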